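/- For any L-sentence φ such that BST ∪ {¬φ, α} is satisfiable for some UC-instance α = ∃y∀x(x∈y ↔ ψ(x)), the UC-instance β := ∃y∀x(x∈y ↔ ((¬φ → ψ(x)) ∧ (φ → ¬x∈x))) satisfies: BST ∪ {β} is satisfiable, but BST ∪ {β, φ} is unsatisfiable. -/

import Mathlib

/-! If `φ` fails, the comprehension formula of `β` is equivalent to `ψ`, so every model of
`¬φ` and `α` is a model of `β`. If `φ` holds, it is equivalent to `x ∉ x`, and `β` asserts the
existence of Russell's set, which no structure has. -/

open FirstOrder FirstOrder.Language

namespace SetParadox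

/-- The language with a single binary relation symbol `∈`. -/
def L : Language := ⟨fun _ => Empty, fun n => match n with | 2 => Unit | _ => Empty⟩

/-- The membership relation symbol. -/
def memRel : L.Relations 2 := Unit.unit

/-- `memF t₁ t₂` is the atomic formula `t₁ ∈ t₂`. -/
def memF {n : ℕ} (t₁ t₂ : L.Term (Empty ⊕ Fin n)) : L.BoundedFormula Empty n :=
  memRel.boundedFormula₂ t₁ t₂

/-- Extensionality: `∀y∀z(∀x(x∈y ↔ x∈z) → y=z)`. -/
def extAx : L.Sentence :=
  ∀' ∀' ((∀' (memF (&2) (&0) ⇔ memF (&2) (&1))) ⟹ ((&0) =' (&1)))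

/-- Basic set theory: the theory whose only axiom is extensionality. -/
def BST : L.Theory := {extAx}

/-- The UC-instance `∃y∀x(x∈y ↔ φ(x))` determined by a formula `φ` with one free
variable `x` (so that `y` does not occur free in `φ`). -/
def UCinst (φ : L.BoundedFormula Empty 1) : L.Sentence :=
  ∃' ∀' (memF (&1) (&0) ⇔ φ.liftAt 1 0)

lemma realize_liftAt_sentence {L' : Language} {M : Type*} [L'.Structure M] (φ : L'.Sentence)
    (xs : Fin 1 → M) : (φ.liftAt 1 0).Realize default xs ↔ M ⊨ φ := by
  rw [BoundedFormula.realize_liftAt_one_self]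
  exact iff_of_eq (congrArg _ (Subsingleton.elim _ _))

def curryFormula (φ : L.Sentence) (ψ : L.BoundedFormula Empty 1) : L.BoundedFormula Empty 1 :=
  (∼(φ.liftAt 1 0) ⟹ ψ) ⊓ (φ.liftAt 1 0 ⟹ ∼(memF (&0) (&0)))

section Semantics

variable {M : Type*} [L.Structure M]

lemma realize_UCinst (χ : L.BoundedFormula Empty 1) :
    M ⊨ UCinst χ ↔ ∃ y : M, ∀ x : M, Structure.RelMap memRel ![x, y] ↔ χ.Realize default ![x] := by
  simp only [UCinst, Sentence.Realize, Formula.Realize, BoundedFormula.realize_ex,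
    BoundedFormula.realize_all, BoundedFormula.realize_iff, memF,
    BoundedFormula.realize_rel₂, BoundedFormula.realize_liftAt_one (Nat.zero_le 1)]
  refine exists_congr fun y => forall_congr' fun x => iff_congr Iff.rfl (iff_of_eq ?_)
  congr 1
  funext i
  fin_cases i
  rfl

lemma realize_UCinst_congr {χ χ' : L.BoundedFormula Empty 1}
    (h : ∀ x : M, χ.Realize default ![x] ↔ χ'.Realize default ![x]) :
    M ⊨ UCinst χ ↔ M ⊨ UCinst χ' := by
  simp only [realize_UCinst, h]

lemma realize_memF_self (x : M) :
    (memF (&0) (&0)).Realize default ![x] ↔ Structure.RelMap memRel ![x, x] := by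
  simp only [memF, BoundedFormula.realize_rel₂]
  exact iff_of_eq (congrArg _ (by funext i; fin_cases i <;> rfl))

theorem not_realize_UCinst_not_memF_self : ¬ M ⊨ UCinst ∼(memF (&0) (&0)) := by
  rw [realize_UCinst]
  rintro ⟨r, hr⟩
  have hrr := hr r
  rw [BoundedFormula.realize_not, realize_memF_self] at hrr
  exact iff_not_self hrr

variable (φ : L.Sentence) (ψ : L.BoundedFormula Empty 1)

lemma realize_UCinst_curryFormula_of_not (hφ : ¬ M ⊨ φ) :
    M ⊨ UCinst (curryFormula φ ψ) ↔ M ⊨ UCinst ψ :=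
  realize_UCinst_congr fun x => by
    simp only [curryFormula, BoundedFormula.realize_inf, BoundedFormula.realize_imp,
      BoundedFormula.realize_not, realize_liftAt_sentence]
    tauto

lemma not_realize_UCinst_curryFormula_of_realize (hφ : M ⊨ φ) :
    ¬ M ⊨ UCinst (curryFormula φ ψ) := by
  rw [realize_UCinst_congr (χ' := ∼(memF (&0) (&0))) fun x => by
    simp only [curryFormula, BoundedFormula.realize_inf, BoundedFormula.realize_imp,
      BoundedFormula.realize_not, realize_liftAt_sentence]
    tauto]
  exact not_realize_UCinst_not_memF_self

end Semantics

/-- For any sentence `φ` such that `BST ∪ {¬φ, α}` is satisfiable for some UC-instance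
`α = ∃y∀x(x∈y ↔ ψ(x))`, the UC-instance
`β := ∃y∀x(x∈y ↔ ((¬φ → ψ(x)) ∧ (φ → ¬x∈x)))` satisfies: `BST ∪ {β}` is satisfiable
but `BST ∪ {β, φ}` is unsatisfiable. -/
theorem curry_trick (φ : L.Sentence) (ψ : L.BoundedFormula Empty 1)
    (h : (BST ∪ {∼φ, UCinst ψ}).IsSatisfiable) :
    (BST ∪ {UCinst ((∼(φ.liftAt 1 0) ⟹ ψ) ⊓ (φ.liftAt 1 0 ⟹ ∼(memF (&0) (&0))))}).IsSatisfiable ∧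
    ¬ (BST ∪ {UCinst ((∼(φ.liftAt 1 0) ⟹ ψ) ⊓ (φ.liftAt 1 0 ⟹ ∼(memF (&0) (&0)))),
        φ}).IsSatisfiable := by
  change (BST ∪ {UCinst (curryFormula φ ψ)}).IsSatisfiable ∧
    ¬ (BST ∪ {UCinst (curryFormula φ ψ), φ}).IsSatisfiable
  constructor
  · obtain ⟨M⟩ := h
    obtain ⟨hBST, hnφ, hψ⟩ : M ⊨ BST ∧ ¬ M ⊨ φ ∧ M ⊨ UCinst ψ := by
      simpa only [Theory.model_union_iff, Theory.model_insert_iff, Theory.model_singleton_iff,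
        Sentence.realize_not] using M.is_model
    have hβ := (realize_UCinst_curryFormula_of_not φ ψ hnφ).2 hψ
    have : M ⊨ BST ∪ {UCinst (curryFormula φ ψ)} :=
      Theory.model_union_iff.2 ⟨hBST, Theory.model_singleton_iff.2 hβ⟩
    exact ⟨Theory.ModelType.of _ M⟩
  · rintro ⟨N⟩
    obtain ⟨-, hβ, hφ⟩ : N ⊨ BST ∧ N ⊨ UCinst (curryFormula φ ψ) ∧ N ⊨ φ := by
      simpa only [Theory.model_union_iff, Theory.model_insert_iff, Theory.model_singleton_iff]
        using N.is_model
    exact not_realize_UCinst_curryFormula_of_realize φ ψ hφ hβ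

end SetParadox
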